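/- Let W be an invertible operator on H ⊕ H with W*JW ≤ J, J = [[0,−I],[−I,0]]. If A, B are positive real operators in the domain of T_W with A ∼ B, i.e. A − B = Re(A)^{1/2} X̃ Re(B)^{1/2} for a bounded operator X̃, then T_W[A] − T_W[B] = Re(T_W[A])^{1/2} X̃_W Re(T_W[B])^{1/2} for some bounded operator X̃_W with ‖X̃_W‖ ≤ ‖X̃‖. -/

import Mathlib

/-!
Write `T_A = (W₁₁A + W₁₂)(W₂₁A + W₂₂)⁻¹`, `D_B = (W₂₁B + W₂₂)⁻¹` and `C = W₁₁ - T_A W₂₁`; then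
`T_A - T_B = C (A - B) D_B`. Testing `W* J W ≤ J` on the vectors `(B D_B v, D_B v)` gives
`Re T_B ≥ D_B* Re(B) D_B`, and testing it on suitably corrected vectors gives
`Re T_A ≥ C Re(A) C*`. By Douglas' lemma these inequalities yield contractions `M`, `K` with
`M Re(T_B)^{1/2} = Re(B)^{1/2} D_B` and `K Re(T_A)^{1/2} = Re(A)^{1/2} C*`, so that
`T_A - T_B = Re(T_A)^{1/2} (K* X̃ M) Re(T_B)^{1/2}`.
-/

open ContinuousLinearMap

variable {H : Type*} [NormedAddCommGroup H] [InnerProductSpace ℂ H] [CompleteSpace H]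

/-- The real part `(T + T*)/2` of a bounded operator. -/
noncomputable def opRe (T : H →L[ℂ] H) : H →L[ℂ] H :=
  (2 : ℂ)⁻¹ • (T + ContinuousLinearMap.adjoint T)

/-- The positive square root of the real part of an operator. -/
noncomputable def sqrtRe (T : H →L[ℂ] H) : H →L[ℂ] H := CFC.sqrt (opRe T)

open scoped ComplexStarModule

theorem ContinuousLinearMap.exists_norm_le_one_comp_eq_of_norm_apply_le
    {𝕜 E F G : Type*} [RCLike 𝕜] [NormedAddCommGroup E] [NormedSpace 𝕜 E]
    [NormedAddCommGroup F] [InnerProductSpace 𝕜 F] [CompleteSpace F]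
    [NormedAddCommGroup G] [NormedSpace 𝕜 G] [CompleteSpace G]
    (f : E →L[𝕜] G) (g : E →L[𝕜] F) (h : ∀ x, ‖f x‖ ≤ ‖g x‖) :
    ∃ m : F →L[𝕜] G, ‖m‖ ≤ 1 ∧ m ∘L g = f := by
  -- `g x ↦ f x` on the range of `g`, extended by continuity to its closure `K`
  -- and by `0` on `Kᗮ`
  let R := LinearMap.range (g : E →ₗ[𝕜] F)
  let K := R.topologicalClosure
  have : CompleteSpace K := R.isClosed_topologicalClosure.completeSpace_coe
  let g' : E →ₗ[𝕜] K := (g : E →ₗ[𝕜] F).codRestrict K fun x ↦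
    R.le_topologicalClosure (LinearMap.mem_range_self _ x)
  have hdense : DenseRange g' := by
    rw [DenseRange, Topology.IsInducing.subtypeVal.dense_iff]
    intro y
    rw [← Set.range_comp]
    exact y.2
  have hbound : ∀ x, ‖f x‖ ≤ 1 * ‖g' x‖ := fun x ↦ by simpa [g'] using h x
  refine ⟨(f : E →ₗ[𝕜] G).extendOfNorm g' ∘L K.orthogonalProjectionOnto, ?_, ?_⟩
  · exact (opNorm_comp_le _ _).trans <| mul_le_one₀
      (LinearMap.opNorm_extendOfNorm_le hdense zero_le_one hbound) (norm_nonneg _)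
      K.orthogonalProjectionOnto_norm_le
  · ext x
    have hx : K.orthogonalProjectionOnto (g x) = g' x :=
      K.orthogonalProjectionOnto_mem_subspace_eq_self (g' x)
    simp only [comp_apply, hx]
    exact LinearMap.extendOfNorm_eq hdense ⟨1, hbound⟩ x

theorem ContinuousLinearMap.norm_comp_comp_le_of_norm_le_one {𝕜 E F G K : Type*}
    [NontriviallyNormedField 𝕜] [SeminormedAddCommGroup E] [SeminormedAddCommGroup F]
    [SeminormedAddCommGroup G] [SeminormedAddCommGroup K] [NormedSpace 𝕜 E] [NormedSpace 𝕜 F]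
    [NormedSpace 𝕜 G] [NormedSpace 𝕜 K] {a : G →L[𝕜] K} {b : E →L[𝕜] F} (ha : ‖a‖ ≤ 1)
    (hb : ‖b‖ ≤ 1) (x : F →L[𝕜] G) : ‖a ∘L x ∘L b‖ ≤ ‖x‖ :=
  calc ‖a ∘L x ∘L b‖ ≤ ‖a‖ * (‖x‖ * ‖b‖) :=
        (opNorm_comp_le _ _).trans (by gcongr; exact opNorm_comp_le _ _)
    _ ≤ 1 * (‖x‖ * 1) := by gcongr
    _ = ‖x‖ := by ring

theorem ContinuousLinearMap.norm_cfcSqrt_apply_sq {E : Type*}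
    [NormedAddCommGroup E] [InnerProductSpace ℂ E] [CompleteSpace E]
    {P : E →L[ℂ] E} (hP : 0 ≤ P) (x : E) :
    ‖CFC.sqrt P x‖ ^ 2 = (inner ℂ (P x) x).re := by
  have hsa : IsSelfAdjoint (CFC.sqrt P) := (CFC.sqrt_nonneg P).isSelfAdjoint
  conv_rhs => rw [← CFC.sqrt_mul_sqrt_self P hP, mul_apply_eq_comp, ← hsa.adjoint_eq,
    adjoint_inner_left, hsa.adjoint_eq]
  exact (inner_self_eq_norm_sq (𝕜 := ℂ) _).symm

section LinearFractional

variable {R E : Type*} [Ring R] [AddCommGroup E] [Module R E] [TopologicalSpace E]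
  [IsTopologicalAddGroup E] {W11 W12 W21 W22 A T : E →L[R] E}

theorem apply_eq_of_comp_eq (hT : T ∘L (W21 ∘L A + W22) = W11 ∘L A + W12) (x y : E) :
    W11 x + W12 y = T (W21 x + W22 y) + (W11 - T ∘L W21) (x - A y) := by
  have h : W12 y = T (W21 (A y)) + T (W22 y) - W11 (A y) := by
    refine eq_sub_of_add_eq' (Eq.symm ?_)
    simpa using congr($hT y)
  simp only [sub_apply, comp_apply, map_add, map_sub, h]
  abel

theorem sub_eq_comp_sub_comp_of_comp_eq {B D : E →L[R] E}
    (hT : T ∘L (W21 ∘L A + W22) = W11 ∘L A + W12) (hD : (W21 ∘L B + W22) ∘L D = 1) :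
    T - (W11 ∘L B + W12) ∘L D = (W11 - T ∘L W21) ∘L (A - B) ∘L D := by
  ext v
  have hv : W21 (B (D v)) + W22 (D v) = v := by simpa using congr($hD v)
  have h := apply_eq_of_comp_eq hT (B (D v)) (D v)
  rw [hv] at h
  simp only [sub_apply, comp_apply, add_apply, h, map_sub]
  abel

end LinearFractional

theorem opRe_eq_realPart (T : H →L[ℂ] H) : opRe T = ℜ T := by
  rw [realPart_apply_coe, opRe, star_eq_adjoint, ← Complex.coe_smul]
  norm_num

theorem isSelfAdjoint_opRe (T : H →L[ℂ] H) : IsSelfAdjoint (opRe T) := by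
  rw [opRe_eq_realPart]
  exact (ℜ T).2

theorem re_inner_opRe_apply_self (T : H →L[ℂ] H) (x : H) :
    (inner ℂ (opRe T x) x).re = (inner ℂ (T x) x).re := by
  have h : (inner ℂ x (T x)).re = (inner ℂ (T x) x).re := inner_re_symm (𝕜 := ℂ) _ _
  simp only [opRe, smul_apply, add_apply, inner_smul_left, inner_add_left, adjoint_inner_left]
  simp [Complex.mul_re, h]
  ring

theorem isPositive_opRe_iff (T : H →L[ℂ] H) :
    (opRe T).IsPositive ↔ ∀ x, 0 ≤ (inner ℂ (T x) x).re := by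
  simp only [isPositive_def', reApplyInnerSelf_apply, RCLike.re_to_complex,
    re_inner_opRe_apply_self, isSelfAdjoint_opRe, true_and]

theorem isSelfAdjoint_sqrtRe (T : H →L[ℂ] H) : IsSelfAdjoint (sqrtRe T) :=
  (CFC.sqrt_nonneg _).isSelfAdjoint

theorem norm_sqrtRe_apply_sq {T : H →L[ℂ] H} (hT : (opRe T).IsPositive) (x : H) :
    ‖sqrtRe T x‖ ^ 2 = (inner ℂ (T x) x).re := by
  rw [sqrtRe, norm_cfcSqrt_apply_sq ((nonneg_iff_isPositive _).2 hT), re_inner_opRe_apply_self]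

theorem norm_sqrtRe_apply_le_iff {S T : H →L[ℂ] H} (hS : (opRe S).IsPositive)
    (hT : (opRe T).IsPositive) (u v : H) :
    ‖sqrtRe S u‖ ≤ ‖sqrtRe T v‖ ↔ (inner ℂ (S u) u).re ≤ (inner ℂ (T v) v).re := by
  rw [← norm_sqrtRe_apply_sq hS, ← norm_sqrtRe_apply_sq hT,
    pow_le_pow_iff_left₀ (norm_nonneg _) (norm_nonneg _) two_ne_zero]

/-- `W = [[W11, W12], [W21, W22]]` satisfies `W* J W ≤ J` for `J = [[0, -I], [-I, 0]]`. -/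
def IsJContractive {E : Type*} [NormedAddCommGroup E] [InnerProductSpace ℂ E]
    (W11 W12 W21 W22 : E →L[ℂ] E) : Prop :=
  ∀ x y : E, (inner ℂ x y).re ≤ (inner ℂ (W11 x + W12 y) (W21 x + W22 y)).re

theorem IsJContractive.re_inner_le_of_comp_eq_one {E : Type*} [NormedAddCommGroup E]
    [InnerProductSpace ℂ E] {W11 W12 W21 W22 A D : E →L[ℂ] E}
    (hW : IsJContractive W11 W12 W21 W22) (hD : (W21 ∘L A + W22) ∘L D = 1) (v : E) :
    (inner ℂ (A (D v)) (D v)).re ≤ (inner ℂ (((W11 ∘L A + W12) ∘L D) v) v).re := by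
  have hv : W21 (A (D v)) + W22 (D v) = v := by simpa using congr($hD v)
  simpa [hv] using hW (A (D v)) (D v)

theorem IsJContractive.re_inner_adjoint_le {W11 W12 W21 W22 A T : H →L[ℂ] H}
    (hW : IsJContractive W11 W12 W21 W22) (hA : ∀ u, 0 ≤ (inner ℂ (A u) u).re)
    (hT : T ∘L (W21 ∘L A + W22) = W11 ∘L A + W12)
    (hsurj : Function.Surjective (W21 ∘L A + W22)) (v : H) :
    (inner ℂ (A (adjoint (W11 - T ∘L W21) v)) (adjoint (W11 - T ∘L W21) v)).re ≤
      (inner ℂ (T v) v).re := by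
  set c := adjoint (W11 - T ∘L W21) v with hc
  -- test vector `(-A* c + A u, c + u)`: `W` maps it to `(_, v)` and `x - A y = -(A + A*) c`
  obtain ⟨u, hu⟩ := hsurj (v - W22 c + W21 (adjoint A c))
  have hv : W21 (-adjoint A c + A u) + W22 (c + u) = v := by
    simp only [add_apply, comp_apply] at hu
    simp only [map_add, map_neg]
    rw [← add_assoc, add_right_comm _ (W21 (A u)), add_assoc, hu]
    abel
  have hxy : -adjoint A c + A u - A (c + u) = -(A c + adjoint A c) := by
    rw [map_add]
    abel
  have h := hW (-adjoint A c + A u) (c + u)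
  rw [apply_eq_of_comp_eq hT, hv, hxy, inner_add_left (T v),
    ← adjoint_inner_right (W11 - T ∘L W21), ← hc] at h
  simp only [inner_add_left, inner_add_right, inner_neg_left, adjoint_inner_left, Complex.add_re,
    Complex.neg_re] at h
  have hcAc : (inner ℂ c (A c)).re = (inner ℂ (A c) c).re := inner_re_symm (𝕜 := ℂ) _ _
  have hcAu : (inner ℂ c (A u)).re = (inner ℂ (A u) c).re := inner_re_symm (𝕜 := ℂ) _ _
  linarith [hA u]

theorem stmt17_general (W11 W12 W21 W22 : H →L[ℂ] H)
    -- `W* J W ≤ J` for `J = [[0, -I], [-I, 0]]`, written blockwise: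
    (hJ : ∀ x y : H, (inner ℂ x y : ℂ).re ≤
      (inner ℂ (W11 x + W12 y) (W21 x + W22 y) : ℂ).re)
    (A B : H →L[ℂ] H) (hA : (opRe A).IsPositive) (hB : (opRe B).IsPositive)
    (DAinv DBinv : H →L[ℂ] H)
    (hDA1 : (W21 ∘L A + W22) ∘L DAinv = 1) (hDA2 : DAinv ∘L (W21 ∘L A + W22) = 1)
    (hDB1 : (W21 ∘L B + W22) ∘L DBinv = 1)
    (X : H →L[ℂ] H) (hX : A - B = sqrtRe A ∘L X ∘L sqrtRe B) :
    ∃ XW : H →L[ℂ] H, ‖XW‖ ≤ ‖X‖ ∧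
      (W11 ∘L A + W12) ∘L DAinv - (W11 ∘L B + W12) ∘L DBinv =
        sqrtRe ((W11 ∘L A + W12) ∘L DAinv) ∘L XW ∘L
          sqrtRe ((W11 ∘L B + W12) ∘L DBinv) := by
  have hW : IsJContractive W11 W12 W21 W22 := hJ
  set TA := (W11 ∘L A + W12) ∘L DAinv
  set TB := (W11 ∘L B + W12) ∘L DBinv
  set C := W11 - TA ∘L W21
  have hTA : TA ∘L (W21 ∘L A + W22) = W11 ∘L A + W12 := by
    rw [comp_assoc, hDA2, one_def, comp_id]
  have hA' := (isPositive_opRe_iff A).1 hA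
  have hTApos : (opRe TA).IsPositive :=
    (isPositive_opRe_iff TA).2 fun v ↦ (hA' _).trans (hW.re_inner_le_of_comp_eq_one hDA1 v)
  have hTBpos : (opRe TB).IsPositive := (isPositive_opRe_iff TB).2 fun v ↦
    ((isPositive_opRe_iff B).1 hB _).trans (hW.re_inner_le_of_comp_eq_one hDB1 v)
  obtain ⟨M, hM, hMB⟩ := exists_norm_le_one_comp_eq_of_norm_apply_le (sqrtRe B ∘L DBinv)
    (sqrtRe TB) fun v ↦
      (norm_sqrtRe_apply_le_iff hB hTBpos _ _).2 (hW.re_inner_le_of_comp_eq_one hDB1 v)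
  obtain ⟨K, hK, hKA⟩ := exists_norm_le_one_comp_eq_of_norm_apply_le (sqrtRe A ∘L adjoint C)
    (sqrtRe TA) fun v ↦ (norm_sqrtRe_apply_le_iff hA hTApos _ _).2
      (hW.re_inner_adjoint_le hA' hTA (fun v ↦ ⟨DAinv v, congr($hDA1 v)⟩) v)
  have hKA' : sqrtRe TA ∘L adjoint K = C ∘L sqrtRe A := by
    simpa [adjoint_comp, (isSelfAdjoint_sqrtRe _).adjoint_eq] using congr(adjoint $hKA)
  refine ⟨adjoint K ∘L X ∘L M, norm_comp_comp_le_of_norm_le_one (by simpa) hM X, ?_⟩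
  rw [sub_eq_comp_sub_comp_of_comp_eq hTA hDB1, hX]
  calc C ∘L (sqrtRe A ∘L X ∘L sqrtRe B) ∘L DBinv
      = (C ∘L sqrtRe A) ∘L X ∘L (sqrtRe B ∘L DBinv) := by simp only [comp_assoc]
    _ = _ := by rw [← hKA', ← hMB]; simp only [comp_assoc]

theorem stmt17 (W11 W12 W21 W22 V11 V12 V21 V22 : H →L[ℂ] H)
    -- `W* J W ≤ J` for `J = [[0, -I], [-I, 0]]`, written blockwise:
    (hJ : ∀ x y : H, (inner ℂ x y : ℂ).re ≤
      (inner ℂ (W11 x + W12 y) (W21 x + W22 y) : ℂ).re)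
    -- `V = [[V11, V12], [V21, V22]]` is the (two-sided) inverse of `W`:
    (hWV1 : W11 ∘L V11 + W12 ∘L V21 = 1) (hWV2 : W11 ∘L V12 + W12 ∘L V22 = 0)
    (hWV3 : W21 ∘L V11 + W22 ∘L V21 = 0) (hWV4 : W21 ∘L V12 + W22 ∘L V22 = 1)
    (hVW1 : V11 ∘L W11 + V12 ∘L W21 = 1) (hVW2 : V11 ∘L W12 + V12 ∘L W22 = 0)
    (hVW3 : V21 ∘L W11 + V22 ∘L W21 = 0) (hVW4 : V21 ∘L W12 + V22 ∘L W22 = 1)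
    (A B : H →L[ℂ] H) (hA : (opRe A).IsPositive) (hB : (opRe B).IsPositive)
    (DAinv DBinv : H →L[ℂ] H)
    (hDA1 : (W21 ∘L A + W22) ∘L DAinv = 1) (hDA2 : DAinv ∘L (W21 ∘L A + W22) = 1)
    (hDB1 : (W21 ∘L B + W22) ∘L DBinv = 1) (hDB2 : DBinv ∘L (W21 ∘L B + W22) = 1)
    (X : H →L[ℂ] H) (hX : A - B = sqrtRe A ∘L X ∘L sqrtRe B) :
    ∃ XW : H →L[ℂ] H, ‖XW‖ ≤ ‖X‖ ∧
      (W11 ∘L A + W12) ∘L DAinv - (W11 ∘L B + W12) ∘L DBinv =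
        sqrtRe ((W11 ∘L A + W12) ∘L DAinv) ∘L XW ∘L
          sqrtRe ((W11 ∘L B + W12) ∘L DBinv) :=
  stmt17_general W11 W12 W21 W22 hJ A B hA hB DAinv DBinv hDA1 hDA2 hDB1 X hX
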